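/- arXiv:2502.03615 — 6 statements merged into one kernel-verified Lean document; each statement's English description precedes it below -/
import Mathlib

section
/- For all integers s ≥ 1, n ≥ 1 and all integers k, the bi^s-nomial coefficient satisfies the absorption identity k · binom_s(n, k) = n · Σ_{j=1}^{s} j · binom_s(n−1, k−j). -/
/-- The bi^s-nomial coefficient: the coefficient of `x^k` in `(1 + x + ⋯ + x^s)^n`,
extended by `0` for negative `k`. -/
noncomputable def bsnomial (s n : ℕ) (k : ℤ) : ℕ :=
  if 0 ≤ k then
    ((∑ i ∈ Finset.range (s + 1), (Polynomial.X : Polynomial ℕ) ^ i) ^ n).coeff k.toNat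
  else 0

open Polynomial Finset

lemma nat_absorption (s n m : ℕ) :
    ((∑ i ∈ range (s + 1), (X : Polynomial ℕ) ^ i) ^ n).coeff (m + 1) * (m + 1) =
      n * ∑ j ∈ Icc 1 s,
        (if j ≤ m + 1 then
          j * ((∑ i ∈ range (s + 1), (X : Polynomial ℕ) ^ i) ^ (n - 1)).coeff (m + 1 - j)
        else 0) := by
  set P : Polynomial ℕ := ∑ i ∈ range (s + 1), X ^ i with hP
  have h1 : (derivative (P ^ n)).coeff m = (P ^ n).coeff (m + 1) * (m + 1) := by
    simpa using coeff_derivative (P ^ n) m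
  rw [derivative_pow] at h1
  have hd : derivative P = ∑ i ∈ range (s + 1), C (i : ℕ) * X ^ (i - 1) := by
    rw [hP, map_sum]
    exact Finset.sum_congr rfl fun i _ => derivative_X_pow i
  simp only [Nat.cast_id] at h1
  rw [hd] at h1
  have h2 : (C (n : ℕ) * P ^ (n - 1) * ∑ i ∈ range (s + 1), C (i : ℕ) * X ^ (i - 1)).coeff m
      = n * ∑ i ∈ range (s + 1),
          (if i - 1 ≤ m then i * (P ^ (n - 1)).coeff (m - (i - 1)) else 0) := by
    rw [mul_assoc, coeff_C_mul, Finset.mul_sum]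
    congr 1
    rw [finset_sum_coeff]
    refine Finset.sum_congr rfl fun i _ => ?_
    rw [mul_comm (C (i : ℕ)) (X ^ (i - 1) : Polynomial ℕ), ← mul_assoc, coeff_mul_C,
      coeff_mul_X_pow']
    split <;> ring
  rw [h2] at h1
  rw [← h1]
  congr 1
  have hsub : Icc 1 s ⊆ range (s + 1) := by
    intro x hx
    simp only [Finset.mem_Icc] at hx
    simp only [Finset.mem_range]
    omega
  rw [← Finset.sum_subset hsub]
  · refine Finset.sum_congr rfl fun i hi => ?_
    obtain ⟨hi1, _⟩ := Finset.mem_Icc.mp hi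
    by_cases h : i ≤ m + 1
    · rw [if_pos h, if_pos (by omega : i - 1 ≤ m)]
      congr 2
      omega
    · rw [if_neg h, if_neg (by omega : ¬ i - 1 ≤ m)]
  · intro i hi hni
    have : i = 0 := by
      simp only [Finset.mem_range, Finset.mem_Icc] at hi hni
      omega
    simp [this]

theorem bsnomial_absorption (s n : ℕ) (hs : 1 ≤ s) (hn : 1 ≤ n) (k : ℤ) :
    k * (bsnomial s n k : ℤ) =
      (n : ℤ) * ∑ j ∈ Finset.Icc 1 s, (j : ℤ) * (bsnomial s (n - 1) (k - (j : ℤ)) : ℤ) := by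
  have hneg : ∀ z : ℤ, z < 0 → ∀ N, bsnomial s N z = 0 := by
    intro z hz N
    simp [bsnomial, not_le.mpr hz]
  rcases lt_or_ge k 1 with hk | hk
  · -- k ≤ 0 : both sides vanish
    have hL : k * (bsnomial s n k : ℤ) = 0 := by
      rcases lt_or_ge k 0 with h | h
      · rw [hneg k h n]; ring
      · have : k = 0 := by omega
        rw [this]; ring
    rw [hL]
    have hR : ∀ j ∈ Finset.Icc 1 s,
        (j : ℤ) * (bsnomial s (n - 1) (k - (j : ℤ)) : ℤ) = 0 := by
      intro j hj
      have hj1 : 1 ≤ j := (Finset.mem_Icc.mp hj).1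
      rw [hneg (k - j) (by omega) (n - 1)]
      ring
    rw [Finset.sum_congr rfl hR]
    simp
  · -- k ≥ 1, write k = m + 1
    obtain ⟨m, rfl⟩ : ∃ m : ℕ, k = (m : ℤ) + 1 := by
      refine ⟨(k - 1).toNat, ?_⟩
      omega
    have key := nat_absorption s n m
    have hL : bsnomial s n ((m : ℤ) + 1)
        = ((∑ i ∈ range (s + 1), (X : Polynomial ℕ) ^ i) ^ n).coeff (m + 1) := by
      rw [bsnomial, if_pos (by omega)]
      congr 1
    have hR : ∀ j ∈ Finset.Icc 1 s,
        (j : ℤ) * (bsnomial s (n - 1) (((m : ℤ) + 1) - (j : ℤ)) : ℤ)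
          = ((if j ≤ m + 1 then
              j * ((∑ i ∈ range (s + 1), (X : Polynomial ℕ) ^ i) ^ (n - 1)).coeff (m + 1 - j)
            else 0 : ℕ) : ℤ) := by
      intro j hj
      have hj1 : 1 ≤ j := (Finset.mem_Icc.mp hj).1
      by_cases h : j ≤ m + 1
      · rw [if_pos h]
        rw [bsnomial, if_pos (by omega : (0:ℤ) ≤ ((m : ℤ) + 1) - (j : ℤ))]
        have : (((m : ℤ) + 1) - (j : ℤ)).toNat = m + 1 - j := by omega
        rw [this]
        push_cast
        ring
      · rw [if_neg h]
        rw [hneg (((m : ℤ) + 1) - (j : ℤ)) (by omega) (n - 1)]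
        simp
    rw [hL, Finset.sum_congr rfl hR, ← Nat.cast_sum, ← Nat.cast_mul]
    rw [← key]
    push_cast
    ring
end

section
/- For every integer n ≥ 0, the coefficients of the three-Catalan triangle satisfy C(n+1, 0) = C(n, 0) + C(n, 1) + C(n, 2) + C(n, 3). -/
/-- The quadrinomial coefficient: the coefficient of `x^k` in `(1 + x + x^2 + x^3)^n`,
extended by `0` for negative `k`. -/
noncomputable def quadrinomial (n : ℕ) (k : ℤ) : ℕ :=
  if 0 ≤ k then
    ((∑ i ∈ Finset.range 4, (Polynomial.X : Polynomial ℕ) ^ i) ^ n).coeff k.toNat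
  else 0

/-- The coefficients of the three-Catalan triangle. -/
noncomputable def threeCatalan (n : ℕ) (k : ℤ) : ℤ :=
  if 0 ≤ k ∧ k ≤ 3 * (n : ℤ) then
    (quadrinomial (2 * n) (3 * (n : ℤ) + k) : ℤ) -
      (quadrinomial (2 * n) (3 * (n : ℤ) + k + 1) : ℤ)
  else 0

open Polynomial Finset

private noncomputable def P3 : Polynomial ℕ := ∑ i ∈ Finset.range 4, Polynomial.X ^ i

private lemma P3_eq : P3 = 1 + X + X ^ 2 + X ^ 3 := by simp [P3, Finset.sum_range_succ]

private lemma P3_natDegree : P3.natDegree = 3 := by rw [P3_eq]; compute_degree!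

private lemma P3_monic : P3.Monic := by rw [P3_eq]; monicity!

private lemma P3_reverse : P3.reverse = P3 := by
  have h : P3 = X ^ 0 + X ^ 1 + X ^ 2 + X ^ 3 := by rw [P3_eq]; ring
  rw [Polynomial.reverse, P3_natDegree]
  conv_lhs => rw [h]
  simp only [reflect_add, reflect_monomial]
  have e0 : revAt 3 0 = 3 := revAt_le (by norm_num)
  have e1 : revAt 3 1 = 2 := revAt_le (by norm_num)
  have e2 : revAt 3 2 = 1 := revAt_le (by norm_num)
  have e3 : revAt 3 3 = 0 := revAt_le (by norm_num)
  rw [e0, e1, e2, e3, h]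
  ring

private lemma P3_pow_reverse (k : ℕ) : (P3 ^ k).reverse = P3 ^ k := by
  induction k with
  | zero => simp [Polynomial.reverse]
  | succ k ih =>
    rw [pow_succ, Polynomial.reverse_mul (by
      rw [(P3_monic.pow k).leadingCoeff, P3_monic.leadingCoeff]; norm_num), ih, P3_reverse]

private lemma P3_pow_sym (k i : ℕ) (h : i ≤ 3 * k) :
    (P3 ^ k).coeff i = (P3 ^ k).coeff (3 * k - i) := by
  have hnd : (P3 ^ k).natDegree = 3 * k := by
    rw [Polynomial.natDegree_pow, P3_natDegree]; ring
  conv_lhs => rw [← P3_pow_reverse k]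
  rw [Polynomial.coeff_reverse, hnd, revAt_le (by omega)]

private lemma P3_coeff (k : ℕ) : P3.coeff k = if k < 4 then 1 else 0 := by
  rw [P3_eq]
  rcases lt_or_ge k 4 with h | h
  · interval_cases k <;> simp [Polynomial.coeff_one, Polynomial.coeff_X]
  · simp only [if_neg (by omega : ¬ k < 4)]
    simp [coeff_X_pow, coeff_one, Polynomial.coeff_X, (by omega : k ≠ 0), (by omega : ¬ (1:ℕ) = k),
      (by omega : ¬ k = 2), (by omega : ¬ k = 3)]
    omega

private lemma step (Q : Polynomial ℕ) (m : ℕ) (hm : 3 ≤ m) :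
    (Q * P3).coeff m = Q.coeff m + Q.coeff (m-1) + Q.coeff (m-2) + Q.coeff (m-3) := by
  have h : P3 = X ^ 0 + X ^ 1 + X ^ 2 + X ^ 3 := by rw [P3_eq]; ring
  rw [h, mul_add, mul_add, mul_add, coeff_add, coeff_add, coeff_add,
    Polynomial.coeff_mul_X_pow', Polynomial.coeff_mul_X_pow',
    Polynomial.coeff_mul_X_pow', Polynomial.coeff_mul_X_pow',
    if_pos (by omega), if_pos (by omega), if_pos (by omega), if_pos (by omega), Nat.sub_zero]

private lemma two_step (k m : ℕ) (hm : 6 ≤ m) :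
    ((P3 ^ k) * P3 * P3).coeff m =
      (P3^k).coeff m + 2*(P3^k).coeff (m-1) + 3*(P3^k).coeff (m-2) + 4*(P3^k).coeff (m-3)
        + 3*(P3^k).coeff (m-4) + 2*(P3^k).coeff (m-5) + (P3^k).coeff (m-6) := by
  rw [step _ m (by omega), step _ m (by omega), step _ (m-1) (by omega),
    step _ (m-2) (by omega), step _ (m-3) (by omega),
    show m-1-1 = m-2 from by omega, show m-1-2 = m-3 from by omega,
    show m-1-3 = m-4 from by omega, show m-2-1 = m-3 from by omega,
    show m-2-2 = m-4 from by omega, show m-2-3 = m-5 from by omega,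
    show m-3-1 = m-4 from by omega, show m-3-2 = m-5 from by omega,
    show m-3-3 = m-6 from by omega]
  ring

private lemma quad_eval (N j : ℕ) : quadrinomial N ((j : ℕ) : ℤ) = (P3 ^ N).coeff j := by
  rw [quadrinomial, if_pos (by positivity)]
  norm_num
  rfl

theorem threeCatalan_rec_zero (n : ℕ) :
    threeCatalan (n + 1) 0 =
      threeCatalan n 0 + threeCatalan n 1 + threeCatalan n 2 + threeCatalan n 3 := by
  cases n with
  | zero =>
    have h3 : (P3 ^ 2).coeff 3 = 4 := by
      rw [pow_two, step P3 3 le_rfl]; simp [P3_coeff]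
    have h4 : (P3 ^ 2).coeff 4 = 3 := by
      rw [pow_two, step P3 4 (by omega)]; simp [P3_coeff]
    have c1 : (0:ℤ) ≤ 0 ∧ (0:ℤ) ≤ 3 * ((0+1 : ℕ) : ℤ) := by norm_num
    have c0 : (0:ℤ) ≤ 0 ∧ (0:ℤ) ≤ 3 * ((0 : ℕ) : ℤ) := by norm_num
    have nc1 : ¬ ((0:ℤ) ≤ 1 ∧ (1:ℤ) ≤ 3 * ((0 : ℕ) : ℤ)) := by norm_num
    have nc2 : ¬ ((0:ℤ) ≤ 2 ∧ (2:ℤ) ≤ 3 * ((0 : ℕ) : ℤ)) := by norm_num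
    have nc3 : ¬ ((0:ℤ) ≤ 3 ∧ (3:ℤ) ≤ 3 * ((0 : ℕ) : ℤ)) := by norm_num
    simp only [threeCatalan, if_pos c1, if_pos c0, if_neg nc1, if_neg nc2, if_neg nc3]
    have g : ∀ j : ℕ, ((j : ℕ) : ℤ) + 1 = ((j+1 : ℕ) : ℤ) := fun j => by push_cast; ring
    have e1 : (3 * ((0+1 : ℕ) : ℤ) + 0) = ((3 : ℕ) : ℤ) := by norm_num
    have e3 : (3 * ((0 : ℕ) : ℤ) + 0) = ((0 : ℕ) : ℤ) := by norm_num
    rw [e1, e3, g 3, g 0, show (3+1 : ℕ) = 4 from rfl, show (0+1 : ℕ) = 1 from rfl,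
      quad_eval, quad_eval, quad_eval, quad_eval]
    norm_num [h3, h4, Polynomial.coeff_one]
  | succ m =>
    have cL : (0:ℤ) ≤ 0 ∧ (0:ℤ) ≤ 3 * ((m+1+1 : ℕ) : ℤ) := ⟨le_refl 0, by push_cast; omega⟩
    have c0 : (0:ℤ) ≤ 0 ∧ (0:ℤ) ≤ 3 * ((m+1 : ℕ) : ℤ) := ⟨le_refl 0, by push_cast; omega⟩
    have c1 : (0:ℤ) ≤ 1 ∧ (1:ℤ) ≤ 3 * ((m+1 : ℕ) : ℤ) := ⟨by norm_num, by push_cast; omega⟩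
    have c2 : (0:ℤ) ≤ 2 ∧ (2:ℤ) ≤ 3 * ((m+1 : ℕ) : ℤ) := ⟨by norm_num, by push_cast; omega⟩
    have c3 : (0:ℤ) ≤ 3 ∧ (3:ℤ) ≤ 3 * ((m+1 : ℕ) : ℤ) := ⟨by norm_num, by push_cast; omega⟩
    simp only [threeCatalan, if_pos cL, if_pos c0, if_pos c1, if_pos c2, if_pos c3]
    have g : ∀ j : ℕ, ((j : ℕ) : ℤ) + 1 = ((j+1 : ℕ) : ℤ) := fun j => by push_cast; ring
    have eL1 : (3 * ((m+1+1 : ℕ) : ℤ) + 0) = ((3*m+6 : ℕ) : ℤ) := by push_cast; ring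
    have f0 : (3 * ((m+1 : ℕ) : ℤ) + 0) = ((3*m+3 : ℕ) : ℤ) := by push_cast; ring
    have f2 : (3 * ((m+1 : ℕ) : ℤ) + 1) = ((3*m+4 : ℕ) : ℤ) := by push_cast; ring
    have f4 : (3 * ((m+1 : ℕ) : ℤ) + 2) = ((3*m+5 : ℕ) : ℤ) := by push_cast; ring
    have f6 : (3 * ((m+1 : ℕ) : ℤ) + 3) = ((3*m+6 : ℕ) : ℤ) := by push_cast; ring
    rw [eL1, f0, f2, f4, f6, g (3*m+6), g (3*m+3), g (3*m+4), g (3*m+5),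
      show 3*m+6+1 = 3*m+7 from by omega, show 3*m+3+1 = 3*m+4 from by omega,
      show 3*m+4+1 = 3*m+5 from by omega, show 3*m+5+1 = 3*m+6 from by omega]
    simp only [quad_eval]
    -- rewrite the power on the left
    have hpow : P3 ^ (2*(m+1+1)) = (P3 ^ (2*m+2)) * P3 * P3 := by
      rw [show 2*(m+1+1) = 2*m+2+1+1 from by ring, pow_succ, pow_succ]
    have h2 : 2*(m+1) = 2*m+2 := by ring
    rw [hpow, h2, two_step (2*m+2) (3*m+6) (by omega), two_step (2*m+2) (3*m+7) (by omega),
      show 3*m+6-1 = 3*m+5 from by omega, show 3*m+6-2 = 3*m+4 from by omega,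
      show 3*m+6-3 = 3*m+3 from by omega, show 3*m+6-4 = 3*m+2 from by omega,
      show 3*m+6-5 = 3*m+1 from by omega, show 3*m+6-6 = 3*m from by omega,
      show 3*m+7-1 = 3*m+6 from by omega, show 3*m+7-2 = 3*m+5 from by omega,
      show 3*m+7-3 = 3*m+4 from by omega, show 3*m+7-4 = 3*m+3 from by omega,
      show 3*m+7-5 = 3*m+2 from by omega, show 3*m+7-6 = 3*m+1 from by omega]
    have s0 : (P3 ^ (2*m+2)).coeff (3*m) = (P3 ^ (2*m+2)).coeff (3*m+6) := by
      rw [P3_pow_sym (2*m+2) (3*m) (by omega), show 3*(2*m+2)-(3*m) = 3*m+6 from by omega]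
    have s1 : (P3 ^ (2*m+2)).coeff (3*m+1) = (P3 ^ (2*m+2)).coeff (3*m+5) := by
      rw [P3_pow_sym (2*m+2) (3*m+1) (by omega), show 3*(2*m+2)-(3*m+1) = 3*m+5 from by omega]
    have s2 : (P3 ^ (2*m+2)).coeff (3*m+2) = (P3 ^ (2*m+2)).coeff (3*m+4) := by
      rw [P3_pow_sym (2*m+2) (3*m+2) (by omega), show 3*(2*m+2)-(3*m+2) = 3*m+4 from by omega]
    rw [s0, s1, s2]
    push_cast
    ring
end

section
/- For every integer n ≥ 0, the coefficients of the three-Catalan triangle satisfy C(n+1, 1) = C(n, 0) + 3·C(n, 1) + 3·C(n, 2) + 2·C(n, 3) + C(n, 4). -/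
open Polynomial

noncomputable def PP : Polynomial ℕ := ∑ i ∈ Finset.range 4, (Polynomial.X : Polynomial ℕ) ^ i

lemma PP_sq : PP * PP = 1 + 2*X + 3*X^2 + 4*X^3 + 3*X^4 + 2*X^5 + X^6 := by
  simp [PP, Finset.sum_range_succ]; ring

lemma PP_natDegree : PP.natDegree ≤ 3 := by
  apply Polynomial.natDegree_sum_le_of_forall_le
  intro i hi
  simp at hi
  calc (X^i : Polynomial ℕ).natDegree ≤ i := natDegree_X_pow_le i
    _ ≤ 3 := by omega

lemma PP_pow_natDegree (N : ℕ) : (PP^N).natDegree ≤ 3*N := by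
  calc (PP^N).natDegree ≤ N * PP.natDegree := natDegree_pow_le
    _ ≤ N * 3 := Nat.mul_le_mul_left _ PP_natDegree
    _ = 3*N := by ring

lemma PP_reflect : reflect 3 PP = PP := by
  have h1 : reflect 3 (X : Polynomial ℕ) = X^2 := by
    rw [show (X : Polynomial ℕ) = X^1 by ring, reflect_monomial, revAt_le (by norm_num)]
    norm_num
  simp [PP, Finset.sum_range_succ, reflect_add, reflect_monomial, h1]
  ring

lemma PP_pow_reflect (N : ℕ) : reflect (3*N) (PP^N) = PP^N := by
  induction N with
  | zero => simp [reflect_C]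
  | succ n ih =>
    have : PP^(n+1) = PP^n * PP := pow_succ PP n
    rw [this, show 3*(n+1) = 3*n + 3 by ring,
      reflect_mul _ _ (PP_pow_natDegree n) PP_natDegree, ih, PP_reflect]

lemma PP_symm (N i : ℕ) (h : i ≤ 3*N) : (PP^N).coeff i = (PP^N).coeff (3*N - i) := by
  conv_lhs => rw [← PP_pow_reflect N]
  rw [coeff_reflect, revAt_le h]

lemma step6 (N m : ℕ) :
    (PP^(N+2)).coeff (m+6) =
      (PP^N).coeff (m+6) + 2*(PP^N).coeff (m+5) + 3*(PP^N).coeff (m+4) +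
      4*(PP^N).coeff (m+3) + 3*(PP^N).coeff (m+2) + 2*(PP^N).coeff (m+1) +
      (PP^N).coeff m := by
  have h : PP^(N+2) = PP^N + 2*(PP^N*X) + 3*(PP^N*X^2) + 4*(PP^N*X^3) +
      3*(PP^N*X^4) + 2*(PP^N*X^5) + PP^N*X^6 := by
    rw [pow_add, show PP^2 = PP*PP by ring, PP_sq]; ring
  rw [h]
  simp only [coeff_add]
  rw [show (2*(PP^N*X)) = C 2 * (PP^N*X^1) by simp [C_eq_natCast],
      show (3*(PP^N*X^2)) = C 3 * (PP^N*X^2) by simp [C_eq_natCast],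
      show (4*(PP^N*X^3)) = C 4 * (PP^N*X^3) by simp [C_eq_natCast],
      show (3*(PP^N*X^4)) = C 3 * (PP^N*X^4) by simp [C_eq_natCast],
      show (2*(PP^N*X^5)) = C 2 * (PP^N*X^5) by simp [C_eq_natCast]]
  simp only [coeff_C_mul, coeff_mul_X_pow']
  norm_num
  rw [show m+6-2 = m+4 by omega, show m+6-3 = m+3 by omega,
     show m+6-4 = m+2 by omega, show m+6-5 = m+1 by omega]

lemma quad_coeff (N m : ℕ) : quadrinomial N (m : ℤ) = (PP^N).coeff m := by
  simp [quadrinomial, PP]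

lemma threeCatalan_coeff (n k : ℕ) :
    threeCatalan n (k : ℤ) =
      ((PP^(2*n)).coeff (3*n+k) : ℤ) - ((PP^(2*n)).coeff (3*n+k+1) : ℤ) := by
  have e1 : (3*(n:ℤ) + k) = ((3*n+k : ℕ) : ℤ) := by push_cast; ring
  have e2 : ((3*n+k : ℕ) : ℤ) + 1 = ((3*n+k+1 : ℕ) : ℤ) := by push_cast; ring
  by_cases hk : (k : ℤ) ≤ 3*(n:ℤ)
  · rw [threeCatalan, if_pos ⟨by positivity, hk⟩, e1, e2, quad_coeff, quad_coeff]
  · have hk' : 3*n < k := by exact_mod_cast not_le.mp hk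
    rw [threeCatalan, if_neg (by tauto)]
    have v1 : (PP^(2*n)).coeff (3*n+k) = 0 :=
      coeff_eq_zero_of_natDegree_lt (lt_of_le_of_lt (PP_pow_natDegree (2*n)) (by omega))
    have v2 : (PP^(2*n)).coeff (3*n+k+1) = 0 :=
      coeff_eq_zero_of_natDegree_lt (lt_of_le_of_lt (PP_pow_natDegree (2*n)) (by omega))
    rw [v1, v2]; simp

theorem threeCatalan_rec_one (n : ℕ) :
    threeCatalan (n + 1) 1 =
      threeCatalan n 0 + 3 * threeCatalan n 1 + 3 * threeCatalan n 2 +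
        2 * threeCatalan n 3 + threeCatalan n 4 := by
  have c0 : (0 : ℤ) = ((0 : ℕ) : ℤ) := by norm_num
  have c1 : (1 : ℤ) = ((1 : ℕ) : ℤ) := by norm_num
  have c2 : (2 : ℤ) = ((2 : ℕ) : ℤ) := by norm_num
  have c3 : (3 : ℤ) = ((3 : ℕ) : ℤ) := by norm_num
  have c4 : (4 : ℤ) = ((4 : ℕ) : ℤ) := by norm_num
  rw [c1, c0, c2, c3, c4]
  rw [threeCatalan_coeff, threeCatalan_coeff, threeCatalan_coeff, threeCatalan_coeff,
    threeCatalan_coeff, threeCatalan_coeff]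
  rcases n with _ | m
  · -- n = 0 : direct computation with PP^2 and PP^0
    norm_num
    have h2 : PP^2 = PP*PP := by ring
    rw [h2, PP_sq]
    simp [coeff_one, coeff_X_pow, coeff_add, coeff_X]
  · set N := 2*(m+1) with hN
    have hL1 : (PP^(2*(m+1+1))).coeff (3*(m+1+1)+1) =
        (PP^N).coeff ((3*m+1)+6) + 2*(PP^N).coeff ((3*m+1)+5) + 3*(PP^N).coeff ((3*m+1)+4) +
        4*(PP^N).coeff ((3*m+1)+3) + 3*(PP^N).coeff ((3*m+1)+2) + 2*(PP^N).coeff ((3*m+1)+1) +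
        (PP^N).coeff (3*m+1) := by
      rw [show 2*(m+1+1) = N + 2 by omega, show 3*(m+1+1)+1 = (3*m+1)+6 by omega]
      exact step6 N (3*m+1)
    have hL2 : (PP^(2*(m+1+1))).coeff (3*(m+1+1)+1+1) =
        (PP^N).coeff ((3*m+2)+6) + 2*(PP^N).coeff ((3*m+2)+5) + 3*(PP^N).coeff ((3*m+2)+4) +
        4*(PP^N).coeff ((3*m+2)+3) + 3*(PP^N).coeff ((3*m+2)+2) + 2*(PP^N).coeff ((3*m+2)+1) +
        (PP^N).coeff (3*m+2) := by
      rw [show 2*(m+1+1) = N + 2 by omega, show 3*(m+1+1)+1+1 = (3*m+2)+6 by omega]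
      exact step6 N (3*m+2)
    have hs1 : (PP^N).coeff (3*m+1) = (PP^N).coeff (3*m+5) := by
      rw [PP_symm N (3*m+1) (by omega), show 3*N - (3*m+1) = 3*m+5 by omega]
    have hs2 : (PP^N).coeff (3*m+2) = (PP^N).coeff (3*m+4) := by
      rw [PP_symm N (3*m+2) (by omega), show 3*N - (3*m+2) = 3*m+4 by omega]
    rw [hL1, hL2]
    have e : ∀ k : ℕ, 3*(m+1)+k = 3*m+(3+k) := by omega
    rw [e 0, e 1, e 2, e 3, e 4]
    norm_num
    push_cast [hs1, hs2]
    ring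
end

section
/- For every integer n ≥ 0, the coefficients of the three-Catalan triangle satisfy C(n+1, 2) = C(n, 0) + 3·C(n, 1) + 4·C(n, 2) + 3·C(n, 3) + 2·C(n, 4) + C(n, 5). -/
open Polynomial Finset

noncomputable def P : Polynomial ℕ := ∑ i ∈ Finset.range 4, Polynomial.X ^ i

lemma hP : P = 1 + X + X^2 + X^3 := by
  simp [P, Finset.sum_range_succ]

lemma hP2 : P^2 = 1 + 2*X + 3*X^2 + 4*X^3 + 3*X^4 + 2*X^5 + X^6 := by
  rw [hP]; ring

lemma coeff_P2 (i : ℕ) : (P^2).coeff i =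
    (if i = 0 then 1 else 0) + (if i = 1 then 2 else 0) + (if i = 2 then 3 else 0) +
    (if i = 3 then 4 else 0) + (if i = 4 then 3 else 0) + (if i = 5 then 2 else 0) +
    (if i = 6 then 1 else 0) := by
  rw [hP2]
  simp [coeff_X_pow, coeff_one, coeff_X, mul_ite, eq_comm]

lemma quad_rec (m t : ℕ) : (P^(m+2)).coeff (t+6) =
    (P^m).coeff (t+6) + 2*(P^m).coeff (t+5) + 3*(P^m).coeff (t+4) + 4*(P^m).coeff (t+3) +
    3*(P^m).coeff (t+2) + 2*(P^m).coeff (t+1) + (P^m).coeff t := by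
  have h : P^(m+2) = P^2 * P^m := by ring
  rw [h, Polynomial.coeff_mul, Finset.Nat.sum_antidiagonal_eq_sum_range_succ_mk]
  rw [show (t+6).succ = 7 + t by omega]
  rw [Finset.sum_range_add]
  have h2 : ∀ i ∈ Finset.range t, (P^2).coeff (7+i) * (P^m).coeff (t+6-(7+i)) = 0 := by
    intro i _
    rw [coeff_P2]
    simp only [mul_eq_zero]
    left; split_ifs <;> omega
  rw [Finset.sum_congr rfl h2]
  simp [Finset.sum_range_succ, coeff_P2]

lemma monic_P : P.Monic := by
  rw [hP]
  monicity!

lemma natDegree_P : P.natDegree = 3 := by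
  rw [hP]; compute_degree!

lemma reverse_P : P.reverse = P := by
  ext n
  rw [Polynomial.coeff_reverse, natDegree_P]
  rcases le_or_gt n 3 with h | h
  · rw [Polynomial.revAt_le h, hP]
    simp only [Polynomial.coeff_add, Polynomial.coeff_one, Polynomial.coeff_X, Polynomial.coeff_X_pow]
    interval_cases n <;> norm_num
  · rw [show Polynomial.revAt 3 n = n from if_neg (by omega)]

lemma reverse_Ppow (m : ℕ) : (P^m).reverse = P^m := by
  induction m with
  | zero => simp [Polynomial.reverse, Polynomial.reflect_one]
  | succ k ih =>
    rw [pow_succ, Polynomial.reverse_mul, ih, reverse_P]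
    simp [Polynomial.Monic.leadingCoeff, monic_P, (monic_P.pow k)]

lemma symm_Ppow (m k : ℕ) (hk : k ≤ 3*m) : (P^m).coeff k = (P^m).coeff (3*m - k) := by
  conv_lhs => rw [← reverse_Ppow]
  rw [Polynomial.coeff_reverse]
  congr 1
  rw [Polynomial.natDegree_pow, natDegree_P, Polynomial.revAt_le (by omega)]
  ring_nf


lemma quad_eq (m k : ℕ) : quadrinomial m (k:ℤ) = (P^m).coeff k := by
  simp [quadrinomial, P]

lemma tc_eq (n : ℕ) (k : ℤ) (j : ℕ) (hj : (j:ℤ) = 3*(n:ℤ) + k) (hk : 0 ≤ k)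
    (hk2 : k ≤ 3*(n:ℤ)) :
    threeCatalan n k = ((P^(2*n)).coeff j : ℤ) - ((P^(2*n)).coeff (j+1) : ℤ) := by
  rw [threeCatalan, if_pos ⟨hk, hk2⟩, ← hj, show ((j:ℤ)+1) = ((j+1:ℕ):ℤ) by push_cast; ring,
    quad_eq, quad_eq]

lemma tc_zero (n : ℕ) (k : ℤ) (hk : 3*(n:ℤ) < k) : threeCatalan n k = 0 :=
  if_neg (by omega)

theorem threeCatalan_rec_two (n : ℕ) :
    threeCatalan (n + 1) 2 =
      threeCatalan n 0 + 3 * threeCatalan n 1 + 4 * threeCatalan n 2 +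
        3 * threeCatalan n 3 + 2 * threeCatalan n 4 + threeCatalan n 5 := by
  obtain _|_|m := n
  · rw [tc_eq 1 2 5 (by push_cast; try ring) (by norm_num) (by norm_num),
      tc_eq 0 0 0 (by push_cast; try ring) (by norm_num) (by norm_num),
      tc_zero 0 1 (by norm_num), tc_zero 0 2 (by norm_num), tc_zero 0 3 (by norm_num),
      tc_zero 0 4 (by norm_num), tc_zero 0 5 (by norm_num)]
    norm_num [coeff_P2, Polynomial.coeff_one]
  · have h8 := quad_rec 2 2
    have h9 := quad_rec 2 3
    norm_num [coeff_P2] at h8 h9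
    rw [tc_eq 2 2 8 (by push_cast; try ring) (by norm_num) (by norm_num),
      tc_eq 1 0 3 (by push_cast; try ring) (by norm_num) (by norm_num),
      tc_eq 1 1 4 (by push_cast; try ring) (by norm_num) (by norm_num),
      tc_eq 1 2 5 (by push_cast; try ring) (by norm_num) (by norm_num),
      tc_eq 1 3 6 (by push_cast; try ring) (by norm_num) (by norm_num),
      tc_zero 1 4 (by norm_num), tc_zero 1 5 (by norm_num)]
    norm_num [coeff_P2, h8, h9]
  · have hA := quad_rec (2*(m+2)) (3*m+5)
    have hB := quad_rec (2*(m+2)) (3*m+6)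
    have hS := symm_Ppow (2*(m+2)) (3*m+7) (by omega)
    rw [show 3*(2*(m+2)) - (3*m+7) = 3*m+5 by omega] at hS
    rw [tc_eq (m+2+1) 2 (3*m+5+6) (by push_cast; try ring) (by norm_num) (by push_cast; try omega),
      tc_eq (m+2) 0 (3*m+6) (by push_cast; try ring) (by norm_num) (by push_cast; try omega),
      tc_eq (m+2) 1 (3*m+7) (by push_cast; try ring) (by norm_num) (by push_cast; try omega),
      tc_eq (m+2) 2 (3*m+8) (by push_cast; try ring) (by norm_num) (by push_cast; try omega),
      tc_eq (m+2) 3 (3*m+9) (by push_cast; try ring) (by norm_num) (by push_cast; try omega),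
      tc_eq (m+2) 4 (3*m+10) (by push_cast; try ring) (by norm_num) (by push_cast; try omega),
      tc_eq (m+2) 5 (3*m+11) (by push_cast; try ring) (by norm_num) (by push_cast; try omega)]
    rw [show 2*(m+2+1) = 2*(m+2)+2 by ring, show 3*m+5+6+1 = 3*m+6+6 by ring, hA, hB, hS]
    push_cast
    ring_nf
    try omega
end

section
/- The sequence of three-Catalan numbers is log-convex: for every integer n ≥ 0, C₃(n) · C₃(n+2) ≥ C₃(n+1)², where C₃(n) := binom_3(2n, 3n) − binom_3(2n, 3n+1). -/
/-- The three-Catalan number `C₃(n)`. -/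
noncomputable def threeCatalanNumber (n : ℕ) : ℤ :=
  (quadrinomial (2 * n) (3 * (n : ℤ)) : ℤ) - (quadrinomial (2 * n) (3 * (n : ℤ) + 1) : ℤ)

open Finset Polynomial Complex ComplexConjugate

theorem Finset.sq_sum_pow_succ_mul_le {ι R : Type*} [CommSemiring R] [LinearOrder R]
    [IsStrictOrderedRing R] [ExistsAddOfLE R] (s : Finset ι) {u v : ι → R}
    (hu : ∀ i ∈ s, 0 ≤ u i) (hv : ∀ i ∈ s, 0 ≤ v i) (n : ℕ) :
    (∑ i ∈ s, u i ^ (n + 1) * v i) ^ 2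
      ≤ (∑ i ∈ s, u i ^ n * v i) * ∑ i ∈ s, u i ^ (n + 2) * v i :=
  sum_sq_le_sum_mul_sum_of_sq_le_mul s
    (fun i hi => mul_nonneg (pow_nonneg (hu i hi) _) (hv i hi))
    (fun i hi => mul_nonneg (pow_nonneg (hu i hi) _) (hv i hi))
    (fun _ _ => le_of_eq (by ring))

namespace IsPrimitiveRoot

variable {K : Type*} [Field K] {ω : K} {N : ℕ}

theorem sum_pow_pow (hω : IsPrimitiveRoot ω N) (t : ℕ) :
    ∑ j ∈ range N, (ω ^ j) ^ t = if N ∣ t then (N : K) else 0 := by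
  simp_rw [← pow_mul, mul_comm, pow_mul]
  split_ifs with ht
  · simp [(hω.pow_eq_one_iff_dvd t).mpr ht]
  · have hωt : ω ^ t ≠ 1 := mt (hω.pow_eq_one_iff_dvd t).mp ht
    rw [geom_sum_eq hωt, ← pow_mul, mul_comm, pow_mul, hω.pow_eq_one, one_pow, sub_self,
      zero_div]

theorem natCast_mul_coeff_eq_sum (hω : IsPrimitiveRoot ω N) {p : K[X]} (hp : p.natDegree < N)
    {k : ℕ} (hk : k < N) :
    (N : K) * p.coeff k = ∑ j ∈ range N, p.eval (ω ^ j) * ((ω ^ j) ^ k)⁻¹ := by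
  have hinv (j : ℕ) : ((ω ^ j) ^ k)⁻¹ = (ω ^ j) ^ (N - k) := by
    refine (eq_inv_of_mul_eq_one_left ?_).symm
    rw [← pow_add, Nat.sub_add_cancel hk.le, ← pow_mul, mul_comm, pow_mul, hω.pow_eq_one,
      one_pow]
  have horth (i : ℕ) (hi : i < N) :
      ∑ j ∈ range N, (ω ^ j) ^ (i + (N - k)) = if k = i then (N : K) else 0 := by
    rw [hω.sum_pow_pow]
    -- `0 < i + (N - k) < 2N`, so `N` divides it only when it equals `N`
    refine if_congr ⟨fun hdvd => ?_, fun hki => hki ▸ ⟨1, by omega⟩⟩ rfl rfl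
    have := Nat.eq_of_dvd_of_lt_two_mul (by omega) hdvd (by omega)
    omega
  calc (N : K) * p.coeff k
      = ∑ i ∈ range N, p.coeff i * if k = i then (N : K) else 0 := by
        simp [sum_ite_eq, hk, mul_comm]
    _ = ∑ i ∈ range N, p.coeff i * ∑ j ∈ range N, (ω ^ j) ^ (i + (N - k)) :=
        sum_congr rfl fun i hi => by rw [horth i (mem_range.mp hi)]
    _ = ∑ j ∈ range N, p.eval (ω ^ j) * ((ω ^ j) ^ k)⁻¹ := by
        simp_rw [hinv, eval_eq_sum_range' hp, sum_mul, mul_sum, pow_add, mul_assoc]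
        exact sum_comm

end IsPrimitiveRoot

theorem natCast_quadrinomial_eq_coeff {R : Type*} [Semiring R] (n k : ℕ) :
    (quadrinomial n k : R) = ((∑ i ∈ range 4, (X : R[X]) ^ i) ^ n).coeff k := by
  rw [quadrinomial, if_pos (Int.natCast_nonneg k), Int.toNat_natCast,
    ← eq_natCast (Nat.castRingHom R), ← coeff_map]
  simp [Polynomial.map_sum]

namespace Complex

variable {z : ℂ}

theorem normSq_geom_sum_four (hz : ‖z‖ = 1) :
    (normSq (∑ i ∈ range 4, z ^ i) : ℂ) = (∑ i ∈ range 4, z ^ i) ^ 2 * (z ^ 3)⁻¹ := by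
  have hz0 : z ≠ 0 := norm_ne_zero_iff.mp (by rw [hz]; exact one_ne_zero)
  rw [← mul_conj, map_sum]
  simp only [map_pow, ← inv_eq_conj hz, sum_range_succ, sum_range_zero]
  field_simp
  ring

theorem geom_sum_four_pow_mul_sub_inv (hz : ‖z‖ = 1) (m : ℕ) :
    (∑ i ∈ range 4, z ^ i) ^ (2 * m) * ((z ^ (3 * m))⁻¹ - (z ^ (3 * m + 1))⁻¹)
      = (normSq (∑ i ∈ range 4, z ^ i) : ℂ) ^ m * (1 - conj z) := by
  rw [normSq_geom_sum_four hz, ← inv_eq_conj hz]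
  ring

end Complex

theorem natCast_mul_threeCatalanNumber_eq_sum {N m : ℕ} {ω : ℂ} (hω : IsPrimitiveRoot ω N)
    (hm : 6 * m + 1 < N) :
    (N : ℝ) * threeCatalanNumber m
      = ∑ j ∈ range N, normSq (∑ i ∈ range 4, (ω ^ j) ^ i) ^ m * (1 - (ω ^ j).re) := by
  set p : ℂ[X] := (∑ i ∈ range 4, X ^ i) ^ (2 * m)
  have hdeg : p.natDegree < N := by
    have : (∑ i ∈ range 4, (X : ℂ[X]) ^ i).natDegree ≤ 3 := by
      simp only [sum_range_succ, sum_range_zero]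
      compute_degree
    have : p.natDegree ≤ 2 * m * 3 := natDegree_pow_le_of_le (2 * m) this
    omega
  have hcatalan : (threeCatalanNumber m : ℂ) = p.coeff (3 * m) - p.coeff (3 * m + 1) := by
    rw [threeCatalanNumber, ← natCast_quadrinomial_eq_coeff, ← natCast_quadrinomial_eq_coeff]
    push_cast
    rfl
  have hnorm (j : ℕ) : ‖ω ^ j‖ = 1 := by
    rw [norm_pow, hω.norm'_eq_one (by omega), one_pow]
  have hC : (((N : ℝ) * threeCatalanNumber m : ℝ) : ℂ)
      = ∑ j ∈ range N, (normSq (∑ i ∈ range 4, (ω ^ j) ^ i) : ℂ) ^ m * (1 - conj (ω ^ j)) := by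
    calc (((N : ℝ) * threeCatalanNumber m : ℝ) : ℂ)
        = N * p.coeff (3 * m) - N * p.coeff (3 * m + 1) := by
          push_cast
          rw [hcatalan, mul_sub]
      _ = ∑ j ∈ range N, p.eval (ω ^ j) * (((ω ^ j) ^ (3 * m))⁻¹ - ((ω ^ j) ^ (3 * m + 1))⁻¹) := by
          rw [hω.natCast_mul_coeff_eq_sum hdeg (by omega),
            hω.natCast_mul_coeff_eq_sum hdeg (by omega), ← sum_sub_distrib]
          simp_rw [mul_sub]
      _ = _ := sum_congr rfl fun j _ => by
          simp only [p, eval_pow, eval_finsetSum, eval_X]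
          exact geom_sum_four_pow_mul_sub_inv (hnorm j) m
  rw [← ofReal_re ((N : ℝ) * threeCatalanNumber m), hC, re_sum]
  refine sum_congr rfl fun j _ => ?_
  rw [← ofReal_pow, re_ofReal_mul, sub_re, one_re, conj_re]

theorem threeCatalanNumber_log_convex (n : ℕ) :
    threeCatalanNumber (n + 1) ^ 2 ≤ threeCatalanNumber n * threeCatalanNumber (n + 2) := by
  set N := 6 * n + 14
  set ω := exp (2 * Real.pi * I / N)
  have hω : IsPrimitiveRoot ω N := isPrimitiveRoot_exp N (by omega)
  have hweight (j : ℕ) : 0 ≤ 1 - (ω ^ j).re := by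
    have := re_le_norm (ω ^ j)
    rw [norm_pow, hω.norm'_eq_one (by omega), one_pow] at this
    linarith
  have key := sq_sum_pow_succ_mul_le (range N)
    (u := fun j => normSq (∑ i ∈ range 4, (ω ^ j) ^ i)) (fun j _ => normSq_nonneg _)
    (fun j _ => hweight j) n
  rw [← natCast_mul_threeCatalanNumber_eq_sum hω (by omega),
    ← natCast_mul_threeCatalanNumber_eq_sum hω (by omega),
    ← natCast_mul_threeCatalanNumber_eq_sum hω (by omega),
    mul_pow, mul_mul_mul_comm, ← sq] at key
  exact_mod_cast le_of_mul_le_mul_left key (by positivity)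
end

section
/- For every integer n ≥ 0, the n-th row of the three-Catalan triangle is log-concave: for all integers k, C(n, k−1) · C(n, k+1) ≤ C(n, k)². -/
/-!
Write `c n = threeCatalan n` and `d n k = binom_3(2n, 3n+k) - binom_3(2n, 3n+k+1)`, so that
`c n` is `d n` cut off outside `[0, 3n]`. Multiplying by `(1 + x + x^2 + x^3)^2` shows that
`d (n + 1)` is the convolution `w * d n` with `w = (1, 2, 3, 4, 3, 2, 1)`, and the palindromy of
`(1 + x + x^2 + x^3)^(2n)` makes `d n` antisymmetric about `-1/2`: `d n k = c n k - c n (-1 - k)`.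
So for `k ≥ 0`, `c (n + 1) k` is `w` convolved with this antisymmetrization of `c n`, which
agrees with `(w * c n) k` once `k ≥ 3`.

Induct on `n`. For a log-concave sequence `c ≥ 0` without internal zeros,
`c a * c d ≤ c b * c c` whenever `a ≤ b ≤ c ≤ d` and `a + d = b + c`, and
`(w * c) k ^ 2 - (w * c) (k - 1) * (w * c) (k + 1)` is a nonnegative combination of such
differences `c b * c c - c a * c d`. At `k = 1, 2, 3`, where the reflected part of the
antisymmetrization still contributes, the products `c 0 * c j ≥ 0` are needed as well.
-/

open Polynomial

lemma quadrinomial_of_neg {n : ℕ} {k : ℤ} (hk : k < 0) : quadrinomial n k = 0 :=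
  if_neg hk.not_ge

lemma quadrinomial_zero (k : ℤ) : quadrinomial 0 k = if k = 0 then 1 else 0 := by
  rw [quadrinomial, pow_zero, coeff_one]
  split_ifs <;> omega

lemma quadrinomial_natCast_sub (n m i : ℕ) :
    quadrinomial n ((m : ℤ) - i) =
      if i ≤ m then ((∑ i ∈ Finset.range 4, (X : ℕ[X]) ^ i) ^ n).coeff (m - i) else 0 := by
  unfold quadrinomial
  split_ifs <;> first | omega | congr 1; omega

lemma quadrinomial_succ (n : ℕ) (k : ℤ) :
    quadrinomial (n + 1) k =
      quadrinomial n k + quadrinomial n (k - 1) + quadrinomial n (k - 2) +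
        quadrinomial n (k - 3) := by
  rcases lt_or_ge k 0 with hk | hk
  · simp only [quadrinomial_of_neg, hk, show k - 1 < 0 by omega, show k - 2 < 0 by omega,
      show k - 3 < 0 by omega]
  obtain ⟨m, rfl⟩ := Int.eq_ofNat_of_zero_le hk
  have h1 := quadrinomial_natCast_sub n m 1
  have h2 := quadrinomial_natCast_sub n m 2
  have h3 := quadrinomial_natCast_sub n m 3
  simp only [Nat.cast_one, Nat.cast_ofNat] at h1 h2 h3
  rw [h1, h2, h3, quadrinomial, if_pos hk, quadrinomial, if_pos hk, Int.toNat_natCast, pow_succ,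
    Finset.mul_sum, finsetSum_coeff]
  simp only [coeff_mul_X_pow', Finset.sum_range_succ, Finset.sum_range_zero]
  simp

lemma quadrinomial_add_two (n : ℕ) (k : ℤ) :
    quadrinomial (n + 2) k =
      quadrinomial n k + 2 * quadrinomial n (k - 1) + 3 * quadrinomial n (k - 2) +
        4 * quadrinomial n (k - 3) + 3 * quadrinomial n (k - 4) + 2 * quadrinomial n (k - 5) +
          quadrinomial n (k - 6) := by
  simp only [quadrinomial_succ]
  ring_nf

lemma quadrinomial_eq_zero_of_lt {n : ℕ} {k : ℤ} (hk : 3 * (n : ℤ) < k) :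
    quadrinomial n k = 0 := by
  induction n generalizing k with
  | zero => rw [quadrinomial_zero, if_neg (by omega)]
  | succ n ih =>
    push_cast at hk
    rw [quadrinomial_succ, ih (by omega), ih (by omega), ih (by omega), ih (by omega)]

lemma quadrinomial_symm (n : ℕ) (k : ℤ) : quadrinomial n (3 * n - k) = quadrinomial n k := by
  induction n generalizing k with
  | zero => simp only [quadrinomial_zero]; congr 1; simp
  | succ n ih =>
    rw [quadrinomial_succ, quadrinomial_succ, ← ih k, ← ih (k - 1), ← ih (k - 2),
      ← ih (k - 3)]
    push_cast
    ring_nf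

section Sequences

variable {R : Type*}

/-- Convolution with `1, 2, 3, 4, 3, 2, 1`, the coefficients of `(1 + x + x ^ 2 + x ^ 3) ^ 2`. -/
def conv [Semiring R] (f : ℤ → R) (k : ℤ) : R :=
  f (k - 3) + 2 * f (k - 2) + 3 * f (k - 1) + 4 * f k + 3 * f (k + 1) + 2 * f (k + 2) + f (k + 3)

def antisymmPart [Ring R] (f : ℤ → R) (k : ℤ) : R := f k - f (-1 - k)

lemma conv_antisymmPart_of_three_le [Ring R] {f : ℤ → R} (hf : ∀ k < 0, f k = 0) {k : ℤ}
    (hk : 3 ≤ k) : conv (antisymmPart f) k = conv f k := by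
  simp (disch := omega) only [conv, antisymmPart, hf, sub_zero]

lemma conv_antisymmPart_pos [CommRing R] [LinearOrder R] [IsStrictOrderedRing R] {f : ℤ → R}
    (hf : ∀ k, 0 ≤ f k) (hf₀ : ∀ k < 0, f k = 0) {N : ℤ} (hN : 0 ≤ N)
    (hpos : ∀ k, 0 ≤ k → k ≤ N → 0 < f k) {k : ℤ} (hk₀ : 0 ≤ k) (hk : k ≤ N + 3) :
    0 < conv (antisymmPart f) k := by
  rcases lt_or_ge k 3 with hk3 | hk3
  · have := hpos 0 le_rfl hN
    interval_cases k <;> norm_num [conv, antisymmPart, hf₀] <;>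
      linarith [hf 1, hf 2, hf 3, hf 4, hf 5]
  · rw [conv_antisymmPart_of_three_le hf₀ hk3, conv]
    linarith [hpos (k - 3) (by omega) (by omega), hf (k - 2), hf (k - 1), hf k, hf (k + 1),
      hf (k + 2), hf (k + 3)]

end Sequences

section

variable {R : Type*} [Semiring R] [PartialOrder R]

structure IsLogConcave (f : ℤ → R) : Prop where
  nonneg : ∀ k, 0 ≤ f k
  ordConnected_support : (Function.support f).OrdConnected
  mul_le_sq : ∀ k, f (k - 1) * f (k + 1) ≤ f k ^ 2

lemma IsLogConcave.comp_add_right {f : ℤ → R} (hf : IsLogConcave f) (k : ℤ) :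
    IsLogConcave (fun m ↦ f (m + k)) where
  nonneg m := hf.nonneg (m + k)
  ordConnected_support := hf.ordConnected_support.preimage_mono fun _ _ h ↦ add_le_add_left h k
  mul_le_sq m := by simpa only [sub_add_eq_add_sub, add_right_comm] using hf.mul_le_sq (m + k)

end

namespace IsLogConcave

section

variable {R : Type*} [CommSemiring R] [LinearOrder R] [IsStrictOrderedRing R] {f : ℤ → R}

lemma mul_le_mul_of_le (hf : IsLogConcave f) (i j : ℤ) (hij : i ≤ j := by omega) :
    f (i - 1) * f (j + 1) ≤ f i * f j := by
  induction j, hij using Int.leInduction with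
  | base => simpa only [sq] using hf.mul_le_sq i
  | succ j hij ih =>
    rcases (hf.nonneg (j + 1 + 1)).eq_or_lt with hzero | hpos
    · rw [← hzero, mul_zero]
      exact mul_nonneg (hf.nonneg _) (hf.nonneg _)
    rcases (hf.nonneg (i - 1)).eq_or_lt with hzero | hpos'
    · rw [← hzero, zero_mul]
      exact mul_nonneg (hf.nonneg _) (hf.nonneg _)
    have hmid : 0 < f (j + 1) := (hf.nonneg _).lt_of_ne' <|
      hf.ordConnected_support.out hpos'.ne' hpos.ne' ⟨by omega, by omega⟩
    refine le_of_mul_le_mul_right ?_ hmid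
    calc f (i - 1) * f (j + 1 + 1) * f (j + 1)
        = f (i - 1) * f (j + 1) * f (j + 1 + 1) := by ring
      _ ≤ f i * f j * f (j + 1 + 1) := mul_le_mul_of_nonneg_right ih hpos.le
      _ = f i * (f (j + 1 - 1) * f (j + 1 + 1)) := by rw [add_sub_cancel_right, mul_assoc]
      _ ≤ f i * f (j + 1) ^ 2 := mul_le_mul_of_nonneg_left (hf.mul_le_sq _) (hf.nonneg i)
      _ = f i * f (j + 1) * f (j + 1) := by ring

lemma mul_le_mul_of_add_eq (hf : IsLogConcave f) (a b c d : ℤ) (hab : a ≤ b := by omega)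
    (hbc : b ≤ c := by omega) (habcd : a + d = b + c := by omega) :
    f a * f d ≤ f b * f c := by
  obtain rfl : d = b + c - a := by omega
  induction b, hab using Int.leInduction generalizing c with
  | base => rw [add_sub_cancel_left]
  | succ b hab ih =>
    calc f a * f (b + 1 + c - a) ≤ f b * f (c + 1) := by
          rw [show b + 1 + c - a = b + (c + 1) - a by ring]
          exact ih (c + 1) (by omega) (by omega)
      _ ≤ f (b + 1) * f c := by
          simpa using hf.mul_le_mul_of_le (b + 1) c (by omega)

end

variable {R : Type*} [CommRing R] [LinearOrder R] [IsStrictOrderedRing R] {f : ℤ → R}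

lemma conv_mul_conv_le_sq (hf : IsLogConcave f) (k : ℤ) :
    conv f (k - 1) * conv f (k + 1) ≤ conv f k ^ 2 := by
  have key : ∀ g : ℤ → R, IsLogConcave g → conv g (-1) * conv g 1 ≤ conv g 0 ^ 2 := by
    intro g hg
    norm_num [conv]
    linarith [hg.mul_le_mul_of_add_eq (-4) (-3) (-3) (-2),
      hg.mul_le_mul_of_add_eq (-4) (-3) (-2) (-1), hg.mul_le_mul_of_add_eq (-4) (-3) (-1) 0,
      hg.mul_le_mul_of_add_eq (-4) (-3) 0 1, hg.mul_le_mul_of_add_eq (-4) (-3) 1 2,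
      hg.mul_le_mul_of_add_eq (-4) (-3) 2 3, hg.mul_le_mul_of_add_eq (-4) (-3) 3 4,
      hg.mul_le_mul_of_add_eq (-3) (-2) (-2) (-1), hg.mul_le_mul_of_add_eq (-3) (-2) (-1) 0,
      hg.mul_le_mul_of_add_eq (-3) (-2) 0 1, hg.mul_le_mul_of_add_eq (-3) (-2) 1 2,
      hg.mul_le_mul_of_add_eq (-3) (-2) 2 3, hg.mul_le_mul_of_add_eq (-3) (-2) 3 4,
      hg.mul_le_mul_of_add_eq (-2) (-1) (-1) 0, hg.mul_le_mul_of_add_eq (-2) (-1) 0 1,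
      hg.mul_le_mul_of_add_eq (-2) (-1) 1 2, hg.mul_le_mul_of_add_eq (-2) (-1) 2 3,
      hg.mul_le_mul_of_add_eq (-2) (-1) 3 4, hg.mul_le_mul_of_add_eq (-1) 0 0 1,
      hg.mul_le_mul_of_add_eq (-1) 0 1 2, hg.mul_le_mul_of_add_eq (-1) 0 2 3,
      hg.mul_le_mul_of_add_eq (-1) 0 3 4, hg.mul_le_mul_of_add_eq 0 1 1 2,
      hg.mul_le_mul_of_add_eq 0 1 2 3, hg.mul_le_mul_of_add_eq 0 1 3 4,
      hg.mul_le_mul_of_add_eq 1 2 2 3, hg.mul_le_mul_of_add_eq 1 2 3 4,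
      hg.mul_le_mul_of_add_eq 2 3 3 4]
  convert key _ (hf.comp_add_right k) using 2 <;> simp only [conv] <;> ring_nf

lemma conv_antisymmPart_mul_le_sq (hf : IsLogConcave f) (hf₀ : ∀ k < 0, f k = 0) {k : ℤ}
    (hk : 1 ≤ k) :
    conv (antisymmPart f) (k - 1) * conv (antisymmPart f) (k + 1) ≤
      conv (antisymmPart f) k ^ 2 := by
  rcases lt_or_ge k 4 with hk4 | hk4
  · have h₀ (j : ℤ) := mul_nonneg (hf.nonneg 0) (hf.nonneg j)
    interval_cases k <;> norm_num [conv, antisymmPart, hf₀] <;>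
      linarith [hf.mul_le_mul_of_add_eq 0 1 1 2, hf.mul_le_mul_of_add_eq 0 1 2 3,
        hf.mul_le_mul_of_add_eq 0 1 3 4, hf.mul_le_mul_of_add_eq 0 1 4 5,
        hf.mul_le_mul_of_add_eq 0 1 5 6, hf.mul_le_mul_of_add_eq 0 1 6 7,
        hf.mul_le_mul_of_add_eq 1 2 2 3, hf.mul_le_mul_of_add_eq 1 2 3 4,
        hf.mul_le_mul_of_add_eq 1 2 4 5, hf.mul_le_mul_of_add_eq 1 2 5 6,
        hf.mul_le_mul_of_add_eq 1 2 6 7, hf.mul_le_mul_of_add_eq 2 3 3 4,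
        hf.mul_le_mul_of_add_eq 2 3 4 5, hf.mul_le_mul_of_add_eq 2 3 5 6,
        hf.mul_le_mul_of_add_eq 2 3 6 7, hf.mul_le_mul_of_add_eq 3 4 4 5,
        hf.mul_le_mul_of_add_eq 3 4 5 6, hf.mul_le_mul_of_add_eq 3 4 6 7,
        hf.mul_le_mul_of_add_eq 4 5 5 6, hf.mul_le_mul_of_add_eq 4 5 6 7,
        hf.mul_le_mul_of_add_eq 5 6 6 7,
        h₀ 0, h₀ 1, h₀ 2, h₀ 3, h₀ 4, h₀ 5, h₀ 6, h₀ 7]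
  · have h (j : ℤ) := conv_antisymmPart_of_three_le hf₀ (k := j)
    rw [h (k - 1) (by omega), h k (by omega), h (k + 1) (by omega)]
    exact hf.conv_mul_conv_le_sq k

end IsLogConcave

noncomputable def threeCatalanDiff (n : ℕ) (k : ℤ) : ℤ :=
  (quadrinomial (2 * n) (3 * (n : ℤ) + k) : ℤ) -
    (quadrinomial (2 * n) (3 * (n : ℤ) + k + 1) : ℤ)

lemma threeCatalanDiff_succ (n : ℕ) : threeCatalanDiff (n + 1) = conv (threeCatalanDiff n) := by
  ext k
  simp only [threeCatalanDiff, conv, show 2 * (n + 1) = 2 * n + 2 by ring, quadrinomial_add_two]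
  push_cast
  ring_nf

lemma threeCatalanDiff_neg_one_sub (n : ℕ) (k : ℤ) :
    threeCatalanDiff n (-1 - k) = -threeCatalanDiff n k := by
  rw [threeCatalanDiff, threeCatalanDiff, ← quadrinomial_symm _ (3 * n + (-1 - k)),
    ← quadrinomial_symm _ (3 * n + (-1 - k) + 1)]
  push_cast
  ring_nf

lemma threeCatalanDiff_eq_zero_of_lt {n : ℕ} {k : ℤ} (hk : 3 * (n : ℤ) < k) :
    threeCatalanDiff n k = 0 := by
  rw [threeCatalanDiff, quadrinomial_eq_zero_of_lt, quadrinomial_eq_zero_of_lt] <;> push_cast <;>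
    omega

lemma threeCatalan_of_neg {n : ℕ} {k : ℤ} (hk : k < 0) : threeCatalan n k = 0 :=
  if_neg fun h ↦ hk.not_ge h.1

lemma threeCatalan_of_nonneg {n : ℕ} {k : ℤ} (hk : 0 ≤ k) :
    threeCatalan n k = threeCatalanDiff n k := by
  unfold threeCatalan
  split_ifs with h
  · rfl
  · rw [threeCatalanDiff_eq_zero_of_lt (by omega)]

lemma threeCatalanDiff_eq_antisymmPart (n : ℕ) :
    threeCatalanDiff n = antisymmPart (threeCatalan n) := by
  ext k
  rcases lt_or_ge k 0 with hk | hk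
  · rw [antisymmPart, threeCatalan_of_neg hk, threeCatalan_of_nonneg (by omega),
      threeCatalanDiff_neg_one_sub, zero_sub, neg_neg]
  · rw [antisymmPart, threeCatalan_of_nonneg hk, threeCatalan_of_neg (by omega), sub_zero]

lemma threeCatalan_succ {n : ℕ} {k : ℤ} (hk : 0 ≤ k) :
    threeCatalan (n + 1) k = conv (antisymmPart (threeCatalan n)) k := by
  rw [threeCatalan_of_nonneg hk, threeCatalanDiff_succ, threeCatalanDiff_eq_antisymmPart]

lemma threeCatalan_zero (k : ℤ) : threeCatalan 0 k = if k = 0 then 1 else 0 := by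
  rcases lt_or_ge k 0 with hk | hk
  · rw [threeCatalan_of_neg hk, if_neg hk.ne]
  · rw [threeCatalan_of_nonneg hk, threeCatalanDiff]
    simp only [Nat.cast_zero, mul_zero, zero_add, quadrinomial_zero]
    split_ifs <;> omega

lemma threeCatalan_nonneg_of_pos {n : ℕ}
    (hpos : ∀ k, 0 ≤ k → k ≤ 3 * (n : ℤ) → 0 < threeCatalan n k) (k : ℤ) :
    0 ≤ threeCatalan n k := by
  by_cases hk : 0 ≤ k ∧ k ≤ 3 * (n : ℤ)
  · exact (hpos k hk.1 hk.2).le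
  · rw [threeCatalan, if_neg hk]

lemma threeCatalan_pos {n : ℕ} {k : ℤ} (hk₀ : 0 ≤ k) (hk : k ≤ 3 * (n : ℤ)) :
    0 < threeCatalan n k := by
  induction n generalizing k with
  | zero => rw [threeCatalan_zero, if_pos (by omega)]; exact one_pos
  | succ n ih =>
    rw [threeCatalan_succ hk₀]
    exact conv_antisymmPart_pos (threeCatalan_nonneg_of_pos fun _ ↦ ih)
      (fun _ ↦ threeCatalan_of_neg) (by positivity) (fun _ ↦ ih) hk₀
      (by push_cast at hk; omega)

lemma threeCatalan_nonneg (n : ℕ) (k : ℤ) : 0 ≤ threeCatalan n k :=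
  threeCatalan_nonneg_of_pos (fun _ ↦ threeCatalan_pos) k

lemma ordConnected_support_threeCatalan (n : ℕ) :
    (Function.support (threeCatalan n)).OrdConnected := by
  have : Function.support (threeCatalan n) = Set.Icc 0 (3 * (n : ℤ)) := by
    ext k
    refine ⟨fun hk ↦ ?_, fun hk ↦ (threeCatalan_pos hk.1 hk.2).ne'⟩
    by_contra h
    exact hk (if_neg h)
  rw [this]
  exact Set.ordConnected_Icc

lemma isLogConcave_threeCatalan (n : ℕ) : IsLogConcave (threeCatalan n) := by
  refine ⟨threeCatalan_nonneg n, ordConnected_support_threeCatalan n, ?_⟩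
  induction n with
  | zero =>
    intro k
    simp only [threeCatalan_zero]
    split_ifs <;> omega
  | succ n ih =>
    intro k
    have hf : IsLogConcave (threeCatalan n) :=
      ⟨threeCatalan_nonneg n, ordConnected_support_threeCatalan n, ih⟩
    rcases lt_or_ge k 1 with hk | hk
    · rw [threeCatalan_of_neg (show k - 1 < 0 by omega), zero_mul]
      exact sq_nonneg _
    · rw [threeCatalan_succ (by omega), threeCatalan_succ (by omega), threeCatalan_succ (by omega)]
      exact hf.conv_antisymmPart_mul_le_sq (fun _ ↦ threeCatalan_of_neg) hk

theorem threeCatalan_row_log_concave (n : ℕ) (k : ℤ) :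
    threeCatalan n (k - 1) * threeCatalan n (k + 1) ≤ (threeCatalan n k) ^ 2 :=
  (isLogConcave_threeCatalan n).mul_le_sq k
end
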